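/- arXiv:2012.12357 — 3 statements merged into one kernel-verified Lean document; each statement's English description precedes it below -/
import Mathlib

section
/- Let n be a positive integer and let u be a classical solution of (CH_n) on [0,T). Then the quantity H₁(t) := ∫_ℝ u(t,x) dx is constant on [0,T); that is, ∫_ℝ u(t,x) dx = ∫_ℝ u(0,x) dx for all t ∈ [0,T). -/
open Real MeasureTheory Filter Topology
open scoped ENNReal

/-- The Green function `g(x) = e^{-|x|}/2` of `1 - ∂ₓ²` on `ℝ`. -/
noncomputable def g (x : ℝ) : ℝ := Real.exp (-|x|) / 2

/-- `u_x`. -/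
noncomputable def ux (u : ℝ → ℝ → ℝ) (t x : ℝ) : ℝ := deriv (u t) x
/-- `u_{xx}`. -/
noncomputable def uxx (u : ℝ → ℝ → ℝ) (t x : ℝ) : ℝ := deriv (deriv (u t)) x
/-- `u_{xxx}`. -/
noncomputable def uxxx (u : ℝ → ℝ → ℝ) (t x : ℝ) : ℝ := deriv (deriv (deriv (u t))) x
/-- `u_t`. -/
noncomputable def ut (u : ℝ → ℝ → ℝ) (t x : ℝ) : ℝ := deriv (fun s => u s x) t
/-- `u_{tx}`. -/
noncomputable def utx (u : ℝ → ℝ → ℝ) (t x : ℝ) : ℝ := deriv (fun s => ux u s x) t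
/-- `u_{txx}`. -/
noncomputable def utxx (u : ℝ → ℝ → ℝ) (t x : ℝ) : ℝ := deriv (fun s => uxx u s x) t

/-- `f_t(x) = (n/2) u^{n-1} u_x² + (n(n+3)/(2(n+1))) u^{n+1}`. -/
noncomputable def fLoc (n : ℕ) (u : ℝ → ℝ → ℝ) (t x : ℝ) : ℝ :=
  ((n : ℝ) / 2) * u t x ^ (n - 1) * ux u t x ^ 2
    + ((n : ℝ) * ((n : ℝ) + 3) / (2 * ((n : ℝ) + 1))) * u t x ^ (n + 1)

/-- `F_t(x) = ∂ₓ (g ∗ f_t)(x)`. -/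
noncomputable def FLoc (n : ℕ) (u : ℝ → ℝ → ℝ) (t x : ℝ) : ℝ :=
  deriv (fun z => ∫ y : ℝ, g (z - y) * fLoc n u t y) x

/-- The equation (CH_n) holds pointwise at `(t,x)`. -/
def CHn (n : ℕ) (u : ℝ → ℝ → ℝ) (t x : ℝ) : Prop :=
  ut u t x - utxx u t x
      + (((n : ℝ) + 1) * ((n : ℝ) + 2) / 2) * u t x ^ n * ux u t x
    = ((n : ℝ) * ((n : ℝ) - 1) / 2) * u t x ^ (n - 2) * ux u t x ^ 3
      + 2 * (n : ℝ) * u t x ^ (n - 1) * ux u t x * uxx u t x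
      + u t x ^ n * uxxx u t x

/-- The time interval `[0, T)`, where `T ∈ (0, ∞]`. -/
def timeDomain (T : ℝ≥0∞) : Set ℝ := {t : ℝ | 0 ≤ t ∧ ENNReal.ofReal t < T}

/-- A function which is bounded, integrable, square-integrable and tends to `0` at `±∞`. -/
def Decays (w : ℝ → ℝ) : Prop :=
  (∃ C : ℝ, ∀ x : ℝ, |w x| ≤ C) ∧ Integrable w ∧
    Integrable (fun x => w x ^ 2) ∧ Tendsto w (cocompact ℝ) (𝓝 0)

/-- A classical solution of (CH_n) on `[0,T) × ℝ`. -/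
structure IsClassicalSolution (n : ℕ) (T : ℝ≥0∞) (u : ℝ → ℝ → ℝ) : Prop where
  contDiff_x : ∀ t ∈ timeDomain T, ContDiff ℝ 3 (u t)
  diff_t : ∀ x : ℝ, ∀ t ∈ timeDomain T, DifferentiableAt ℝ (fun s => u s x) t
  diff_tx : ∀ x : ℝ, ∀ t ∈ timeDomain T, DifferentiableAt ℝ (fun s => ux u s x) t
  diff_txx : ∀ x : ℝ, ∀ t ∈ timeDomain T, DifferentiableAt ℝ (fun s => uxx u s x) t
  cont_ut : ContinuousOn (fun p : ℝ × ℝ => ut u p.1 p.2) (timeDomain T ×ˢ Set.univ)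
  cont_utx : ContinuousOn (fun p : ℝ × ℝ => utx u p.1 p.2) (timeDomain T ×ˢ Set.univ)
  cont_utxx : ContinuousOn (fun p : ℝ × ℝ => utxx u p.1 p.2) (timeDomain T ×ˢ Set.univ)
  pde : ∀ t ∈ timeDomain T, ∀ x : ℝ, CHn n u t x
  nonlocal : ∀ t ∈ timeDomain T, ∀ x : ℝ,
    ut u t x + u t x ^ n * ux u t x + FLoc n u t x = 0
  decay_u : ∀ t ∈ timeDomain T, Decays (u t)
  decay_ux : ∀ t ∈ timeDomain T, Decays (ux u t)
  decay_uxx : ∀ t ∈ timeDomain T, Decays (uxx u t)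
  decay_ut : ∀ t ∈ timeDomain T, Decays (ut u t)
  sup_bound : ∀ T₀ ∈ timeDomain T, ∃ M : ℝ, ∀ t ∈ Set.Icc (0 : ℝ) T₀, ∀ x : ℝ,
    |u t x| + |ux u t x| ≤ M

/-! The nonlocal form says `u_t = -∂ₓΦ` for the flux
`Φ = u^{n+1}/(n+1) + g ∗ f_t`, so by Fubini
`∫_{-R}^{R} (u(t,x) - u(0,x)) dx = ∫_0^t (Φ(s,-R) - Φ(s,R)) ds`.
Since `|g ∗ f| ≤ sup |f|`, the flux is bounded on `[0,t] × ℝ` by the uniform bound on `u` and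
`u_x`; it vanishes at `±∞` because `u` and `g ∗ f` do. Dominated convergence in `s` sends the
right-hand side to `0` as `R → ∞`. -/

open Set

lemma continuous_g : Continuous g := by unfold g; fun_prop

lemma g_nonneg (x : ℝ) : 0 ≤ g x := by unfold g; positivity

lemma g_le_half (x : ℝ) : g x ≤ 1 / 2 := by
  have : Real.exp (-|x|) ≤ 1 := Real.exp_le_one_iff.2 (neg_nonpos.2 (abs_nonneg x))
  unfold g; linarith

lemma integral_g : ∫ x, g x = 1 := by
  simp only [g, integral_div, integral_comp_abs (f := fun x => Real.exp (-x)),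
    integral_exp_neg_Ioi_zero]
  norm_num

lemma integrable_g : Integrable g :=
  Integrable.of_integral_ne_zero (by rw [integral_g]; exact one_ne_zero)

lemma tendsto_g_sub_cocompact (y : ℝ) :
    Tendsto (fun x => g (x - y)) (cocompact ℝ) (𝓝 0) := by
  have h := (Real.tendsto_exp_atBot.comp
    (tendsto_neg_atTop_atBot.comp (tendsto_dist_right_cocompact_atTop y))).div_const 2
  simpa [g, Function.comp_def, Real.dist_eq] using h

noncomputable def greenConv (f : ℝ → ℝ) (x : ℝ) : ℝ := ∫ y, g (x - y) * f y

section GreenConv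

variable {f : ℝ → ℝ}

lemma abs_greenConv_le {C : ℝ} (hC : ∀ y, |f y| ≤ C) (x : ℝ) : |greenConv f x| ≤ C := by
  have hbound : ∀ y, ‖g (x - y) * f y‖ ≤ C * g (x - y) := fun y => by
    rw [Real.norm_eq_abs, abs_mul, abs_of_nonneg (g_nonneg _), mul_comm C]
    exact mul_le_mul_of_nonneg_left (hC y) (g_nonneg _)
  calc |greenConv f x| ≤ ∫ y, C * g (x - y) :=
        norm_integral_le_of_norm_le ((integrable_g.comp_sub_left x).const_mul C)
          (Eventually.of_forall hbound)
    _ = C := by rw [integral_const_mul, integral_sub_left_eq_self g volume x, integral_g, mul_one]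

lemma tendsto_greenConv_cocompact (hf : Integrable f) :
    Tendsto (greenConv f) (cocompact ℝ) (𝓝 0) := by
  have hlim : ∀ y, Tendsto (fun x => g (x - y) * f y) (atBot ⊔ atTop) (𝓝 0) := fun y => by
    simpa [← cocompact_eq_atBot_atTop] using (tendsto_g_sub_cocompact y).mul_const (f y)
  have h := tendsto_integral_filter_of_dominated_convergence (F := fun x y => g (x - y) * f y)
    (fun y => |f y| / 2)
    (Eventually.of_forall fun x =>
      ((continuous_g.comp (continuous_sub_left x)).aestronglyMeasurable.mul hf.1))
    (Eventually.of_forall fun x => Eventually.of_forall fun y => by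
      rw [Real.norm_eq_abs, abs_mul, abs_of_nonneg (g_nonneg _)]
      linarith [mul_le_mul_of_nonneg_right (g_le_half (x - y)) (abs_nonneg (f y))])
    (hf.abs.div_const 2) (Eventually.of_forall hlim)
  rw [integral_zero, ← cocompact_eq_atBot_atTop] at h
  exact h

lemma integrableOn_Iic_exp_mul (hf : Integrable f) (a : ℝ) :
    IntegrableOn (fun y => Real.exp y * f y) (Iic a) := by
  refine hf.restrict.bdd_mul (c := Real.exp a) Real.continuous_exp.aestronglyMeasurable
    ((ae_restrict_iff' measurableSet_Iic).2 (Eventually.of_forall fun y hy => ?_))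
  rw [Real.norm_eq_abs, abs_of_pos (Real.exp_pos _)]
  exact Real.exp_le_exp.2 hy

lemma integrableOn_Ioi_exp_neg_mul (hf : Integrable f) (a : ℝ) :
    IntegrableOn (fun y => Real.exp (-y) * f y) (Ioi a) := by
  refine hf.restrict.bdd_mul (c := Real.exp (-a))
    (Real.continuous_exp.comp continuous_neg).aestronglyMeasurable
    ((ae_restrict_iff' measurableSet_Ioi).2 (Eventually.of_forall fun y hy => ?_))
  rw [Real.norm_eq_abs, abs_of_pos (Real.exp_pos _)]
  exact Real.exp_le_exp.2 (neg_le_neg (le_of_lt hy))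

lemma greenConv_eq (hf : Integrable f) (x : ℝ) :
    greenConv f x = (Real.exp (-x) * (∫ y in Iic x, Real.exp y * f y)
      + Real.exp x * ∫ y in Ioi x, Real.exp (-y) * f y) / 2 := by
  have hint : Integrable (fun y => g (x - y) * f y) :=
    hf.bdd_mul (c := 1 / 2) (continuous_g.comp (continuous_sub_left x)).aestronglyMeasurable
      (Eventually.of_forall fun y => by
        rw [Real.norm_eq_abs, abs_of_nonneg (g_nonneg _)]
        exact g_le_half _)
  have hleft : ∫ y in Iic x, g (x - y) * f y
      = Real.exp (-x) / 2 * ∫ y in Iic x, Real.exp y * f y := by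
    rw [← integral_const_mul]
    refine setIntegral_congr_fun measurableSet_Iic fun y hy => ?_
    rw [g, abs_of_nonneg (sub_nonneg.2 (mem_Iic.1 hy)), neg_sub, sub_eq_add_neg, Real.exp_add]
    ring
  have hright : ∫ y in Ioi x, g (x - y) * f y
      = Real.exp x / 2 * ∫ y in Ioi x, Real.exp (-y) * f y := by
    rw [← integral_const_mul]
    refine setIntegral_congr_fun measurableSet_Ioi fun y hy => ?_
    rw [g, abs_of_neg (sub_neg.2 (mem_Ioi.1 hy)), neg_neg, sub_eq_add_neg, Real.exp_add]
    ring
  rw [greenConv, ← intervalIntegral.integral_Iic_add_Ioi hint.integrableOn hint.integrableOn,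
    hleft, hright]
  ring

lemma differentiable_setIntegral_Iic {q : ℝ → ℝ} (hq : Continuous q)
    (hqi : ∀ a, IntegrableOn q (Iic a)) : Differentiable ℝ (fun a => ∫ y in Iic a, q y) := by
  have h : (fun a => ∫ y in Iic a, q y)
      = fun a => (∫ y in Iic 0, q y) + ∫ y in (0 : ℝ)..a, q y :=
    funext fun a => by rw [← intervalIntegral.integral_Iic_sub_Iic (hqi 0) (hqi a)]; ring
  rw [h]
  exact (intervalIntegral.differentiable_integral_of_continuous hq).const_add _

lemma differentiable_setIntegral_Ioi {q : ℝ → ℝ} (hq : Continuous q)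
    (hqi : ∀ a, IntegrableOn q (Ioi a)) : Differentiable ℝ (fun a => ∫ y in Ioi a, q y) := by
  have h : (fun a => ∫ y in Ioi a, q y)
      = fun a => (∫ y in Ioi 0, q y) - ∫ y in (0 : ℝ)..a, q y :=
    funext fun a => by rw [← intervalIntegral.integral_Ioi_sub_Ioi' (hqi 0) (hqi a)]; ring
  rw [h]
  exact (intervalIntegral.differentiable_integral_of_continuous hq).const_sub _

lemma differentiable_greenConv (hfc : Continuous f) (hf : Integrable f) :
    Differentiable ℝ (greenConv f) := by
  have hIic := differentiable_setIntegral_Iic (by fun_prop) (integrableOn_Iic_exp_mul hf)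
  have hIoi := differentiable_setIntegral_Ioi (by fun_prop) (integrableOn_Ioi_exp_neg_mul hf)
  rw [funext (greenConv_eq hf)]
  fun_prop

end GreenConv

section ConservationLaw

variable {v w Φ : ℝ → ℝ → ℝ} {t : ℝ}

lemma intervalIntegral_sub_eq_intervalIntegral_intervalIntegral
    (hv : ∀ x, ∀ s ∈ uIcc 0 t, HasDerivAt (v · x) (w s x) s)
    (hw : Continuous (Function.uncurry w)) (a b : ℝ) :
    ∫ x in a..b, (v t x - v 0 x) = ∫ s in 0..t, ∫ x in a..b, w s x := by
  have hftc : ∀ x, v t x - v 0 x = ∫ s in 0..t, w s x := fun x =>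
    (intervalIntegral.integral_eq_sub_of_hasDerivAt (hv x)
      ((hw.comp (continuous_id.prodMk continuous_const)).intervalIntegrable 0 t)).symm
  simp_rw [hftc]
  refine intervalIntegral_intervalIntegral_swap ?_
  exact ((hw.comp continuous_swap).continuousOn.integrableOn_compact
    (isCompact_uIcc.prod isCompact_uIcc)).mono_set
    (prod_mono uIoc_subset_uIcc uIoc_subset_uIcc)

lemma tendsto_intervalIntegral_intervalIntegral_of_hasDerivAt_flux (ht : 0 ≤ t)
    (hw : Continuous (Function.uncurry w))
    (hΦ : ∀ s ∈ Icc 0 t, ∀ x, HasDerivAt (Φ s) (-w s x) x)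
    {B : ℝ} (hΦB : ∀ s ∈ Icc 0 t, ∀ x, |Φ s x| ≤ B)
    (hΦ_lim : ∀ s ∈ Icc 0 t, Tendsto (Φ s) (cocompact ℝ) (𝓝 0)) :
    Tendsto (fun R => ∫ s in 0..t, ∫ x in -R..R, w s x) atTop (𝓝 0) := by
  have hflux : ∀ s ∈ Icc 0 t, ∀ R, ∫ x in -R..R, w s x = Φ s (-R) - Φ s R := by
    intro s hs R
    have hint : IntervalIntegrable (fun x => -w s x) volume (-R) R :=
      (hw.comp (continuous_const.prodMk continuous_id)).neg.intervalIntegrable _ _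
    rw [← neg_sub, ← intervalIntegral.integral_eq_sub_of_hasDerivAt (fun x _ => hΦ s hs x)
      hint, intervalIntegral.integral_neg, neg_neg]
  have hmem : ∀ s ∈ uIoc 0 t, s ∈ Icc 0 t := fun s hs =>
    Ioc_subset_Icc_self (uIoc_of_le ht ▸ hs)
  have h := intervalIntegral.tendsto_integral_filter_of_dominated_convergence (fun _ => 2 * B)
    (Eventually.of_forall fun R =>
      (intervalIntegral.continuous_parametric_intervalIntegral_of_continuous' hw (-R) R)
        |>.aestronglyMeasurable)
    (Eventually.of_forall fun R => Eventually.of_forall fun s hs => by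
      rw [hflux s (hmem s hs) R, Real.norm_eq_abs]
      linarith [abs_sub (Φ s (-R)) (Φ s R), hΦB s (hmem s hs) (-R), hΦB s (hmem s hs) R])
    (intervalIntegrable_const (μ := volume))
    (Eventually.of_forall fun s hs => by
      simp_rw [hflux s (hmem s hs)]
      have hbot := (hΦ_lim s (hmem s hs)).mono_left atBot_le_cocompact
      have htop := (hΦ_lim s (hmem s hs)).mono_left atTop_le_cocompact
      simpa using (hbot.comp tendsto_neg_atTop_atBot).sub htop)
  simpa using h

theorem integral_eq_of_hasDerivAt_flux (ht : 0 ≤ t)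
    (hv : ∀ x, ∀ s ∈ Icc 0 t, HasDerivAt (v · x) (w s x) s)
    (hw : ContinuousOn (Function.uncurry w) (Icc 0 t ×ˢ univ))
    (hΦ : ∀ s ∈ Icc 0 t, ∀ x, HasDerivAt (Φ s) (-w s x) x)
    {B : ℝ} (hΦB : ∀ s ∈ Icc 0 t, ∀ x, |Φ s x| ≤ B)
    (hΦ_lim : ∀ s ∈ Icc 0 t, Tendsto (Φ s) (cocompact ℝ) (𝓝 0))
    (hv0 : Integrable (v 0)) (hvt : Integrable (v t)) :
    ∫ x, v t x = ∫ x, v 0 x := by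
  -- extend `w` continuously to all times, so that the parametric-integral lemmas apply
  set w' : ℝ → ℝ → ℝ := fun s x => w (projIcc 0 t ht s) x
  have hw' : Continuous (Function.uncurry w') :=
    hw.comp_continuous
      ((continuous_subtype_val.comp (continuous_projIcc (h := ht))).prodMap continuous_id)
      fun p => ⟨(projIcc 0 t ht p.1).2, mem_univ _⟩
  have hww' : ∀ s ∈ Icc 0 t, w' s = w s := fun s hs => by simp only [w', projIcc_of_mem ht hs]
  have hv' : ∀ x, ∀ s ∈ uIcc 0 t, HasDerivAt (v · x) (w' s x) s := fun x s hs => by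
    rw [uIcc_of_le ht] at hs
    rw [hww' s hs]
    exact hv x s hs
  have hΦ' : ∀ s ∈ Icc 0 t, ∀ x, HasDerivAt (Φ s) (-w' s x) x := fun s hs => by
    rw [hww' s hs]
    exact hΦ s hs
  have hlim : Tendsto (fun R => ∫ x in -R..R, (v t x - v 0 x)) atTop
      (𝓝 (∫ x, (v t x - v 0 x))) :=
    intervalIntegral_tendsto_integral (hvt.sub hv0) tendsto_neg_atTop_atBot tendsto_id
  simp_rw [intervalIntegral_sub_eq_intervalIntegral_intervalIntegral hv' hw'] at hlim
  have h := tendsto_nhds_unique hlim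
    (tendsto_intervalIntegral_intervalIntegral_of_hasDerivAt_flux ht hw' hΦ' hΦB hΦ_lim)
  rw [integral_sub hvt hv0] at h
  linarith

end ConservationLaw

lemma Decays.integrable_pow_mul {a b : ℝ → ℝ} (ha : Decays a) (hb : Integrable b) (k : ℕ) :
    Integrable (fun y => a y ^ k * b y) := by
  obtain ⟨C, hC⟩ := ha.1
  refine hb.bdd_mul (c := C ^ k) (ha.2.1.1.pow k) (Eventually.of_forall fun y => ?_)
  rw [Real.norm_eq_abs, abs_pow]
  exact pow_le_pow_left₀ (abs_nonneg _) (hC y) k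

lemma abs_fLoc_le {n : ℕ} {u : ℝ → ℝ → ℝ} {s y M : ℝ} (hu : |u s y| ≤ M)
    (hux : |ux u s y| ≤ M) :
    |fLoc n u s y| ≤ (n : ℝ) / 2 * M ^ (n - 1) * M ^ 2
      + (n : ℝ) * ((n : ℝ) + 3) / (2 * ((n : ℝ) + 1)) * M ^ (n + 1) := by
  have hM : 0 ≤ M := (abs_nonneg _).trans hu
  refine (abs_add_le _ _).trans (add_le_add ?_ ?_) <;>
    simp only [abs_mul, abs_pow, abs_of_nonneg (by positivity : (0 : ℝ) ≤ (n : ℝ) / 2),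
      abs_of_nonneg
        (by positivity : (0 : ℝ) ≤ (n : ℝ) * ((n : ℝ) + 3) / (2 * ((n : ℝ) + 1)))]
  all_goals gcongr

noncomputable def chFlux (n : ℕ) (u : ℝ → ℝ → ℝ) (t x : ℝ) : ℝ :=
  u t x ^ (n + 1) / ((n : ℝ) + 1) + greenConv (fLoc n u t) x

lemma abs_chFlux_le {n : ℕ} {u : ℝ → ℝ → ℝ} {s x M K : ℝ} (hu : |u s x| ≤ M)
    (hK : ∀ y, |fLoc n u s y| ≤ K) :
    |chFlux n u s x| ≤ M ^ (n + 1) / ((n : ℝ) + 1) + K := by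
  refine (abs_add_le _ _).trans (add_le_add ?_ (abs_greenConv_le hK x))
  rw [abs_div, abs_pow, abs_of_pos (by positivity : (0 : ℝ) < (n : ℝ) + 1)]
  gcongr

lemma Icc_subset_timeDomain {T : ℝ≥0∞} {t : ℝ} (ht : t ∈ timeDomain T) :
    Icc 0 t ⊆ timeDomain T := fun _ hs =>
  ⟨hs.1, (ENNReal.ofReal_le_ofReal hs.2).trans_lt ht.2⟩

namespace IsClassicalSolution

variable {n : ℕ} {T : ℝ≥0∞} {u : ℝ → ℝ → ℝ} {s : ℝ}

lemma continuous_fLoc (hu : IsClassicalSolution n T u) (hs : s ∈ timeDomain T) :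
    Continuous (fLoc n u s) := by
  have hu_cont : Continuous (u s) := (hu.contDiff_x s hs).continuous
  have hux_cont : Continuous (ux u s) := (hu.contDiff_x s hs).continuous_deriv (by norm_num)
  unfold fLoc
  fun_prop

lemma integrable_fLoc (hu : IsClassicalSolution n T u) (hs : s ∈ timeDomain T) :
    Integrable (fLoc n u s) := by
  have h1 := (hu.decay_u s hs).integrable_pow_mul (hu.decay_ux s hs).2.2.1 (n - 1)
  have h2 := (hu.decay_u s hs).integrable_pow_mul (hu.decay_u s hs).2.1 n
  refine ((h1.const_mul ((n : ℝ) / 2)).add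
    (h2.const_mul ((n : ℝ) * ((n : ℝ) + 3) / (2 * ((n : ℝ) + 1))))).congr
    (Eventually.of_forall fun y => ?_)
  simp only [fLoc, Pi.add_apply, pow_succ]
  ring

lemma hasDerivAt_chFlux (hu : IsClassicalSolution n T u) (hs : s ∈ timeDomain T) (x : ℝ) :
    HasDerivAt (chFlux n u s) (-ut u s x) x := by
  have hux : HasDerivAt (u s) (ux u s x) x :=
    ((hu.contDiff_x s hs).differentiable (by norm_num) x).hasDerivAt
  have hpow : HasDerivAt (fun z => u s z ^ (n + 1) / ((n : ℝ) + 1)) (u s x ^ n * ux u s x) x := by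
    refine ((hux.pow (n + 1)).div_const ((n : ℝ) + 1)).congr_deriv ?_
    push_cast [Nat.add_sub_cancel]
    field_simp
  have hconv : HasDerivAt (greenConv (fLoc n u s)) (FLoc n u s x) x :=
    (differentiable_greenConv (hu.continuous_fLoc hs) (hu.integrable_fLoc hs) x).hasDerivAt
  exact (hpow.add hconv).congr_deriv (by linarith [hu.nonlocal s hs x])

lemma tendsto_chFlux_cocompact (hu : IsClassicalSolution n T u) (hs : s ∈ timeDomain T) :
    Tendsto (chFlux n u s) (cocompact ℝ) (𝓝 0) := by
  have h := (((hu.decay_u s hs).2.2.2.pow (n + 1)).div_const ((n : ℝ) + 1)).add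
    (tendsto_greenConv_cocompact (hu.integrable_fLoc hs))
  rw [zero_pow (Nat.succ_ne_zero n), zero_div, zero_add] at h
  exact h

lemma exists_bound_chFlux (hu : IsClassicalSolution n T u) {t : ℝ} (ht : t ∈ timeDomain T) :
    ∃ B, ∀ s ∈ Icc 0 t, ∀ x, |chFlux n u s x| ≤ B := by
  obtain ⟨M, hM⟩ := hu.sup_bound t ht
  have hMu : ∀ s ∈ Icc 0 t, ∀ x, |u s x| ≤ M := fun s hs x =>
    le_of_add_le_of_nonneg_left (hM s hs x) (abs_nonneg _)
  have hMux : ∀ s ∈ Icc 0 t, ∀ x, |ux u s x| ≤ M := fun s hs x =>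
    le_of_add_le_of_nonneg_right (hM s hs x) (abs_nonneg _)
  exact ⟨_, fun s hs x => abs_chFlux_le (hMu s hs x)
    fun y => abs_fLoc_le (hMu s hs y) (hMux s hs y)⟩

end IsClassicalSolution

theorem conservation_of_mass_general
    (n : ℕ) (T : ℝ≥0∞) (u : ℝ → ℝ → ℝ)
    (hu : IsClassicalSolution n T u) :
    ∀ t ∈ timeDomain T, (∫ x : ℝ, u t x) = ∫ x : ℝ, u 0 x := by
  intro t ht
  have hIcc := Icc_subset_timeDomain ht
  obtain ⟨B, hB⟩ := hu.exists_bound_chFlux ht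
  exact integral_eq_of_hasDerivAt_flux ht.1
    (fun x s hs => (hu.diff_t x s (hIcc hs)).hasDerivAt)
    (hu.cont_ut.mono (prod_mono hIcc subset_rfl))
    (fun s hs => hu.hasDerivAt_chFlux (hIcc hs)) hB
    (fun s hs => hu.tendsto_chFlux_cocompact (hIcc hs))
    (hu.decay_u 0 (hIcc (left_mem_Icc.2 ht.1))).2.1 (hu.decay_u t ht).2.1

/-- The quantity `H₁(t) = ∫ u(t,x) dx` is conserved. -/
theorem conservation_of_mass
    (n : ℕ) (hn : 0 < n) (T : ℝ≥0∞) (hT : 0 < T) (u : ℝ → ℝ → ℝ)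
    (hu : IsClassicalSolution n T u) :
    ∀ t ∈ timeDomain T, (∫ x : ℝ, u t x) = ∫ x : ℝ, u 0 x :=
  conservation_of_mass_general n T u hu
end

section
/- Let f : ℝ → ℝ be continuous, nonnegative and integrable, and let F(x) := (∂_x g ∗ f)(x) = −(1/2)∫_ℝ sgn(x−y) e^{−|x−y|} f(y) dy (which equals the derivative of g ∗ f). Suppose there exist real numbers x₀ < x₁ such that f vanishes identically on the interval (x₀,x₁) and F(x₀) = F(x₁). Then f is identically zero on ℝ. -/
/-!
Splitting the kernel at `x` gives `F(x) = -½ (e^{-x} A(x) - e^{x} B(x))` with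
`A(x) = ∫_{y<x} e^y f(y) dy` and `B(x) = ∫_{y>x} e^{-y} f(y) dy`. As `f` vanishes on
`(x₀, x₁)`, `A` and `B` take the same values `A ≥ 0`, `B ≥ 0` at `x₀` and `x₁`, so
`F(x₁) - F(x₀) = ½ ((e^{-x₀} - e^{-x₁}) A + (e^{x₁} - e^{x₀}) B)` has positive
coefficients. Hence `F(x₀) = F(x₁)` forces `A = B = 0`, and the continuous nonnegative `f`
then vanishes on `(-∞, x₀]` and `[x₁, ∞)`.
-/

open Real MeasureTheory Filter Topology

/-- `F = ∂ₓ(g ∗ f)`, given by `F(x) = -(1/2)∫ sgn(x-y) e^{-|x-y|} f(y) dy`. -/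
noncomputable def Fconv (f : ℝ → ℝ) (x : ℝ) : ℝ :=
  -(1 / 2) * ∫ y : ℝ, Real.sign (x - y) * Real.exp (-|x - y|) * f y

open Set

section WeightedTails

variable {f : ℝ → ℝ}

lemma integrableOn_exp_mul_Iio (hi : Integrable f) (x : ℝ) :
    IntegrableOn (fun y => exp y * f y) (Iio x) := by
  refine hi.integrableOn.bdd_mul (c := exp x) continuous_exp.aestronglyMeasurable ?_
  filter_upwards [ae_restrict_mem measurableSet_Iio] with y hy
  rw [norm_of_nonneg (exp_pos y).le]
  exact exp_le_exp.2 (le_of_lt hy)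

lemma integrableOn_exp_neg_mul_Ioi (hi : Integrable f) (x : ℝ) :
    IntegrableOn (fun y => exp (-y) * f y) (Ioi x) := by
  refine hi.integrableOn.bdd_mul (c := exp (-x))
    (continuous_exp.comp continuous_neg).aestronglyMeasurable ?_
  filter_upwards [ae_restrict_mem measurableSet_Ioi] with y hy
  rw [norm_of_nonneg (exp_pos _).le]
  exact exp_le_exp.2 (neg_le_neg (le_of_lt hy))

lemma Fconv_eq_exp_mul_sub (hi : Integrable f) (x : ℝ) :
    Fconv f x = -(1 / 2) * (exp (-x) * (∫ y in Iio x, exp y * f y)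
      - exp x * ∫ y in Ioi x, exp (-y) * f y) := by
  have hk_left : EqOn (fun y => exp (-x) * (exp y * f y))
      (fun y => Real.sign (x - y) * exp (-|x - y|) * f y) (Iio x) := fun y hy => by
    have hxy : 0 < x - y := sub_pos.2 hy
    dsimp only
    rw [Real.sign_of_pos hxy, abs_of_pos hxy, neg_sub, sub_eq_add_neg, exp_add]
    ring
  have hk_right : EqOn (fun y => -(exp x * (exp (-y) * f y)))
      (fun y => Real.sign (x - y) * exp (-|x - y|) * f y) (Ioi x) := fun y hy => by
    have hxy : x - y < 0 := sub_neg.2 hy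
    dsimp only
    rw [Real.sign_of_neg hxy, abs_of_neg hxy, neg_neg, sub_eq_add_neg, exp_add]
    ring
  have hk_Iio := IntegrableOn.congr_fun ((integrableOn_exp_mul_Iio hi x).const_mul _) hk_left
    measurableSet_Iio
  have hk_Ioi := IntegrableOn.congr_fun ((integrableOn_exp_neg_mul_Ioi hi x).const_mul _).neg
    hk_right measurableSet_Ioi
  rw [Fconv, ← intervalIntegral.integral_Iio_add_Ici hk_Iio
      ((integrableOn_Ici_iff_integrableOn_Ioi).2 hk_Ioi), integral_Ici_eq_integral_Ioi,
    ← setIntegral_congr_fun measurableSet_Iio hk_left,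
    ← setIntegral_congr_fun measurableSet_Ioi hk_right, integral_const_mul, integral_neg,
    integral_const_mul, ← sub_eq_add_neg]

end WeightedTails

lemma setIntegral_Iio_eq_of_forall_Ioo_eq_zero {h : ℝ → ℝ} {a b : ℝ} (hab : a < b)
    (hh : ∀ x ∈ Ioo a b, h x = 0) : ∫ x in Iio b, h x = ∫ x in Iio a, h x := by
  rw [← integral_Iic_eq_integral_Iio (x := a)]
  exact setIntegral_eq_of_subset_of_forall_sdiff_eq_zero measurableSet_Iio (Iic_subset_Iio.2 hab)
    fun x ⟨hxb, hxa⟩ => hh x ⟨not_le.1 hxa, hxb⟩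

lemma setIntegral_Ioi_eq_of_forall_Ioo_eq_zero {h : ℝ → ℝ} {a b : ℝ} (hab : a < b)
    (hh : ∀ x ∈ Ioo a b, h x = 0) : ∫ x in Ioi a, h x = ∫ x in Ioi b, h x := by
  rw [← integral_Ici_eq_integral_Ioi (x := b)]
  exact setIntegral_eq_of_subset_of_forall_sdiff_eq_zero measurableSet_Ioi (Ici_subset_Ioi.2 hab)
    fun x ⟨hxa, hxb⟩ => hh x ⟨hxa, not_le.1 hxb⟩

lemma eqOn_closure_zero_of_setIntegral_mul_eq_zero {X : Type*} [TopologicalSpace X]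
    [MeasurableSpace X] {μ : Measure X} [μ.IsOpenPosMeasure] {w f : X → ℝ} {s : Set X}
    (hs : IsOpen s) (hw : Continuous w) (hw_pos : ∀ x, 0 < w x)
    (hf : Continuous f) (hf_nonneg : ∀ x, 0 ≤ f x) (hi : IntegrableOn (fun x => w x * f x) s μ)
    (h0 : ∫ x in s, w x * f x ∂μ = 0) : EqOn f 0 (closure s) := by
  have hwf_ae : (fun x => w x * f x) =ᵐ[μ.restrict s] 0 :=
    (setIntegral_eq_zero_iff_of_nonneg_ae
      (Eventually.of_forall fun x => mul_nonneg (hw_pos x).le (hf_nonneg x)) hi).1 h0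
  have hwf : EqOn (fun x => w x * f x) 0 s :=
    μ.eqOn_open_of_ae_eq hwf_ae hs (hw.mul hf).continuousOn continuousOn_const
  refine EqOn.closure (fun x hx => ?_) hf continuous_const
  exact (mul_eq_zero.1 (hwf hx)).resolve_left (hw_pos x).ne'

lemma eq_zero_of_exp_mul_sub_eq {a b A B : ℝ} (hab : a < b) (hA : 0 ≤ A) (hB : 0 ≤ B)
    (h : exp (-a) * A - exp a * B = exp (-b) * A - exp b * B) : A = 0 ∧ B = 0 := by
  have hl : exp (-b) < exp (-a) := exp_lt_exp.2 (neg_lt_neg hab)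
  have hr : exp a < exp b := exp_lt_exp.2 hab
  constructor <;> nlinarith [mul_nonneg (sub_pos.2 hl).le hA, mul_nonneg (sub_pos.2 hr).le hB]

/-- If a continuous, nonnegative, integrable `f` vanishes on `(x₀,x₁)` and
`F(x₀) = F(x₁)`, where `F = ∂ₓ(g ∗ f)`, then `f ≡ 0`. -/
theorem vanishing_from_equal_potentials
    (f : ℝ → ℝ) (hc : Continuous f) (hnn : ∀ x : ℝ, 0 ≤ f x) (hi : Integrable f)
    (x₀ x₁ : ℝ) (hx : x₀ < x₁)
    (hvanish : ∀ x ∈ Set.Ioo x₀ x₁, f x = 0)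
    (hF : Fconv f x₀ = Fconv f x₁) :
    ∀ x : ℝ, f x = 0 := by
  set A := ∫ y in Iio x₀, exp y * f y
  set B := ∫ y in Ioi x₁, exp (-y) * f y
  have hA : ∫ y in Iio x₁, exp y * f y = A :=
    setIntegral_Iio_eq_of_forall_Ioo_eq_zero hx fun y hy => by simp [hvanish y hy]
  have hB : ∫ y in Ioi x₀, exp (-y) * f y = B :=
    setIntegral_Ioi_eq_of_forall_Ioo_eq_zero hx fun y hy => by simp [hvanish y hy]
  rw [Fconv_eq_exp_mul_sub hi, Fconv_eq_exp_mul_sub hi, hA, hB] at hF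
  obtain ⟨hA0, hB0⟩ : A = 0 ∧ B = 0 :=
    eq_zero_of_exp_mul_sub_eq hx
      (setIntegral_nonneg measurableSet_Iio fun y _ => mul_nonneg (exp_pos y).le (hnn y))
      (setIntegral_nonneg measurableSet_Ioi fun y _ => mul_nonneg (exp_pos _).le (hnn y))
      (mul_left_cancel₀ (by norm_num) hF)
  have hleft : EqOn f 0 (Iic x₀) := closure_Iio x₀ ▸
    eqOn_closure_zero_of_setIntegral_mul_eq_zero isOpen_Iio continuous_exp exp_pos hc hnn
      (integrableOn_exp_mul_Iio hi x₀) hA0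
  have hright : EqOn f 0 (Ici x₁) := closure_Ioi x₁ ▸
    eqOn_closure_zero_of_setIntegral_mul_eq_zero isOpen_Ioi (continuous_exp.comp continuous_neg)
      (fun y => exp_pos (-y)) hc hnn (integrableOn_exp_neg_mul_Ioi hi x₁) hB0
  intro x
  rcases le_or_gt x x₀ with h₀ | h₀
  · exact hleft h₀
  rcases lt_or_ge x x₁ with h₁ | h₁
  · exact hvanish x ⟨h₀, h₁⟩
  · exact hright h₁
end

section
/- Let θ ∈ (0,1). For each positive integer N define φ_N : ℝ → ℝ by φ_N(x) = 1 for x ≤ 0, φ_N(x) = e^{θx} for 0 < x < N, and φ_N(x) = e^{θN} for x ≥ N. Then there exists a constant c₀ > 0, depending only on θ, such that for every positive integer N and every x ∈ ℝ: φ_N(x) ∫_ℝ e^{−|x−y|} / φ_N(y) dy ≤ c₀. -/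
open Real MeasureTheory Filter Topology

/-- The cutoff weight `φ_N`. -/
noncomputable def phiN (θ : ℝ) (N : ℕ) (x : ℝ) : ℝ :=
  if x ≤ 0 then 1 else if x < N then Real.exp (θ * x) else Real.exp (θ * N)

/-!
`φ_N(x) = e^{θ c(x)}` where `c` is the 1-Lipschitz clamp of `x` to `[0, N]`, so
`φ_N(x) ≤ e^{θ|x-y|} φ_N(y)` uniformly in `N`. Hence
`φ_N(x) ∫ e^{-|x-y|} / φ_N(y) dy ≤ ∫ e^{-(1-θ)|x-y|} dy = 2 / (1 - θ)`.
-/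

open Set

section ExpNegAbs

variable {a : ℝ}

lemma integrable_exp_neg_mul_abs (ha : 0 < a) : Integrable fun t : ℝ ↦ exp (-(a * |t|)) := by
  have hIic : IntegrableOn (fun t : ℝ ↦ exp (-(a * |t|))) (Iic 0) :=
    (integrableOn_exp_mul_Iic ha 0).congr_fun
      (fun t ht ↦ by rw [abs_of_nonpos ht, mul_neg, neg_neg]) measurableSet_Iic
  have hIoi : IntegrableOn (fun t : ℝ ↦ exp (-(a * |t|))) (Ioi 0) :=
    (integrableOn_exp_mul_Ioi (neg_lt_zero.2 ha) 0).congr_fun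
      (fun t (ht : 0 < t) ↦ by simp [abs_of_pos ht]) measurableSet_Ioi
  rw [← integrableOn_univ, ← Iic_union_Ioi (a := (0 : ℝ))]
  exact hIic.union hIoi

lemma integral_exp_neg_mul_abs (ha : 0 < a) : ∫ t : ℝ, exp (-(a * |t|)) = 2 / a := by
  rw [integral_comp_abs (f := fun t ↦ exp (-(a * t)))]
  simp_rw [← neg_mul]
  rw [integral_exp_mul_Ioi (neg_lt_zero.2 ha), mul_zero, exp_zero]
  field_simp

end ExpNegAbs

theorem mul_integral_exp_neg_abs_sub_div_le {w : ℝ → ℝ} {θ : ℝ} (hθ : θ < 1)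
    (hw : ∀ y, 0 < w y) (hw_lip : ∀ x y, w x ≤ exp (θ * |x - y|) * w y) (x : ℝ) :
    w x * ∫ y, exp (-|x - y|) / w y ≤ 2 / (1 - θ) := by
  have hθ' : 0 < 1 - θ := sub_pos.2 hθ
  have hpointwise : ∀ y, exp (-|x - y|) / w y ≤ exp (-((1 - θ) * |x - y|)) / w x := by
    intro y
    rw [div_le_div_iff₀ (hw y) (hw x)]
    calc exp (-|x - y|) * w x ≤ exp (-|x - y|) * (exp (θ * |x - y|) * w y) := by
          gcongr; exact hw_lip x y
      _ = exp (-((1 - θ) * |x - y|)) * w y := by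
          rw [← mul_assoc, ← exp_add]; ring_nf
  have hmajorant_int : Integrable fun y ↦ exp (-((1 - θ) * |x - y|)) / w x :=
    ((integrable_exp_neg_mul_abs hθ').comp_sub_left x).div_const _
  have hmajorant : ∫ y, exp (-((1 - θ) * |x - y|)) / w x = 2 / (1 - θ) / w x := by
    rw [integral_div, integral_sub_left_eq_self (fun t ↦ exp (-((1 - θ) * |t|))),
      integral_exp_neg_mul_abs hθ']
  calc w x * ∫ y, exp (-|x - y|) / w y
      ≤ w x * ∫ y, exp (-((1 - θ) * |x - y|)) / w x := by
        refine mul_le_mul_of_nonneg_left ?_ (hw x).le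
        exact integral_mono_of_nonneg (.of_forall fun y ↦ by have := hw y; positivity)
          hmajorant_int (.of_forall hpointwise)
    _ = 2 / (1 - θ) := by rw [hmajorant, mul_div_cancel₀ _ (hw x).ne']

lemma phiN_eq_exp_projIcc (θ : ℝ) (N : ℕ) (x : ℝ) :
    phiN θ N x = exp (θ * projIcc (0 : ℝ) N N.cast_nonneg x) := by
  unfold phiN
  split_ifs with h0 hN
  · rw [projIcc_of_le_left _ h0, mul_zero, exp_zero]
  · rw [projIcc_of_mem _ ⟨(not_le.1 h0).le, hN.le⟩]
  · rw [projIcc_of_right_le _ (not_lt.1 hN)]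

lemma phiN_pos (θ : ℝ) (N : ℕ) (x : ℝ) : 0 < phiN θ N x := by
  rw [phiN_eq_exp_projIcc]; exact exp_pos _

lemma phiN_le_exp_mul_abs_sub_mul_phiN {θ : ℝ} (hθ : 0 ≤ θ) (N : ℕ) (x y : ℝ) :
    phiN θ N x ≤ exp (θ * |x - y|) * phiN θ N y := by
  rw [phiN_eq_exp_projIcc, phiN_eq_exp_projIcc, ← exp_add, exp_le_exp]
  set c : ℝ → ℝ := fun t ↦ projIcc (0 : ℝ) N N.cast_nonneg t
  have hclamp : c x - c y ≤ |x - y| := by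
    have := (LipschitzWith.projIcc (N.cast_nonneg : (0 : ℝ) ≤ N)).dist_le_mul x y
    rw [NNReal.coe_one, one_mul, Subtype.dist_eq, Real.dist_eq, Real.dist_eq] at this
    exact (le_abs_self _).trans this
  linarith [mul_le_mul_of_nonneg_left hclamp hθ]

/-- There is a constant `c₀ > 0` depending only on `θ ∈ (0,1)` such that
`φ_N(x) ∫ e^{-|x-y|}/φ_N(y) dy ≤ c₀` for every `N` and every `x`. -/
theorem cutoff_weight_uniform_bound (θ : ℝ) (hθ : θ ∈ Set.Ioo (0 : ℝ) 1) :
    ∃ c₀ : ℝ, 0 < c₀ ∧ ∀ N : ℕ, 0 < N → ∀ x : ℝ,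
      phiN θ N x * (∫ y : ℝ, Real.exp (-|x - y|) / phiN θ N y) ≤ c₀ := by
  obtain ⟨hθ0, hθ1⟩ := hθ
  refine ⟨2 / (1 - θ), div_pos two_pos (sub_pos.2 hθ1), fun N _ x ↦ ?_⟩
  exact mul_integral_exp_neg_abs_sub_div_le hθ1 (phiN_pos θ N)
    (phiN_le_exp_mul_abs_sub_mul_phiN hθ0.le N) x
end
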